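/- For nonzero vectors x, y ∈ ℂⁿ and a matrix X ∈ Mₙ(ℂ) (with the operator norm), the rank-one matrix x y* is Birkhoff–James orthogonal to X if and only if x* X y = 0. -/

import Mathlib

/-!
If `x* X y = 0`, then `x* (x y* + c X) y = ‖x‖² ‖y‖²` for every `c`, which forces
`‖x y* + c X‖ ≥ ‖x‖ ‖y‖ = ‖x y*‖`. Conversely, if `t = x* X y ≠ 0`, take `c = -ε t̄` with
`0 < ε < ‖X‖⁻²`. On the line `ℂ y` we have
`‖(x y* + c X) v‖² ≤ (‖x‖²‖y‖² - 2ε|t|² + ε²|t|²‖X‖²) ‖v‖²`, while on `y^⊥` the rank-one part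
vanishes and `‖c X v‖ ≤ ε |t| ‖X‖ ‖v‖`. Splitting `v` into these orthogonal parts and applying
Cauchy–Schwarz gives `‖x y* + c X‖² ≤ ‖x‖²‖y‖² - 2ε|t|²(1 - ε‖X‖²) < ‖x y*‖²`.
-/

open Matrix

/-- The operator (spectral) norm of a complex matrix, induced by the Euclidean norm on `ℂⁿ`. -/
noncomputable def opNorm {n : ℕ} (A : Matrix (Fin n) (Fin n) ℂ) : ℝ :=
  ‖Matrix.toEuclideanCLM (𝕜 := ℂ) (n := Fin n) A‖

/-- Birkhoff–James orthogonality of matrices with respect to the operator norm. -/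
def BJ {n : ℕ} (A B : Matrix (Fin n) (Fin n) ℂ) : Prop :=
  ∀ c : ℂ, opNorm A ≤ opNorm (A + c • B)

open InnerProductSpace

def BirkhoffJamesOrthogonal (𝕜 : Type*) {E : Type*} [SeminormedAddCommGroup E] [SMul 𝕜 E]
    (a b : E) : Prop :=
  ∀ c : 𝕜, ‖a‖ ≤ ‖a + c • b‖

section RankOne

variable {𝕜 E F : Type*} [RCLike 𝕜] [NormedAddCommGroup E] [InnerProductSpace 𝕜 E]
  [NormedAddCommGroup F] [InnerProductSpace 𝕜 F]

theorem ContinuousLinearMap.opNorm_le_sqrt_of_orthogonal (S : F →L[𝕜] E) (K : Submodule 𝕜 F)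
    [K.HasOrthogonalProjection] {A B : ℝ} (hK : ∀ y ∈ K, ‖S y‖ ≤ A * ‖y‖)
    (hKperp : ∀ z ∈ Kᗮ, ‖S z‖ ≤ B * ‖z‖) : ‖S‖ ≤ √(A ^ 2 + B ^ 2) := by
  refine S.opNorm_le_bound (Real.sqrt_nonneg _) fun v ↦ ?_
  set y := K.starProjection v
  set z := Kᗮ.starProjection v
  have hv : ‖v‖ = √(‖y‖ ^ 2 + ‖z‖ ^ 2) := by
    rw [← K.norm_sq_eq_add_norm_sq_starProjection, Real.sqrt_sq (norm_nonneg v)]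
  calc ‖S v‖ = ‖S y + S z‖ := by rw [← map_add, K.starProjection_add_starProjection_orthogonal]
    _ ≤ A * ‖y‖ + B * ‖z‖ :=
      (norm_add_le _ _).trans (add_le_add (hK y (K.starProjection_apply_mem v))
        (hKperp z (Kᗮ.starProjection_apply_mem v)))
    _ ≤ √((A ^ 2 + B ^ 2) * (‖y‖ ^ 2 + ‖z‖ ^ 2)) :=
      (le_abs_self _).trans <| Real.abs_le_sqrt <| by nlinarith [sq_nonneg (A * ‖z‖ - B * ‖y‖)]
    _ = √(A ^ 2 + B ^ 2) * ‖v‖ := by rw [hv, Real.sqrt_mul (by positivity)]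

theorem norm_rankOne_add_smul_apply_self_sq_le (u : E) (w : F) (T : F →L[𝕜] E) (c : 𝕜) :
    ‖(rankOne 𝕜 u w + c • T) w‖ ^ 2 ≤
      (‖u‖ ^ 2 * ‖w‖ ^ 2 + 2 * RCLike.re (c * inner 𝕜 u (T w)) + ‖c‖ ^ 2 * ‖T‖ ^ 2) * ‖w‖ ^ 2 := by
  have hTw : ‖c • T w‖ ^ 2 ≤ ‖c‖ ^ 2 * ‖T‖ ^ 2 * ‖w‖ ^ 2 := by
    rw [norm_smul, mul_assoc, ← mul_pow, ← mul_pow]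
    gcongr
    exact T.le_opNorm w
  have hinner :
      inner 𝕜 ((‖w‖ ^ 2 : 𝕜) • u) (c • T w) = (‖w‖ ^ 2 : ℝ) * (c * inner 𝕜 u (T w)) := by
    rw [inner_smul_left, inner_smul_right]
    simp
  rw [_root_.add_apply, rankOne_apply, inner_self_eq_norm_sq_to_K,
    _root_.smul_apply, norm_add_sq (𝕜 := 𝕜), hinner, RCLike.re_ofReal_mul, norm_smul]
  simp only [norm_pow, RCLike.norm_ofReal, abs_norm]
  linarith

theorem norm_rankOne_le_norm_rankOne_add_smul (u : E) (w : F) (T : F →L[𝕜] E)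
    (h : inner 𝕜 u (T w) = 0) (c : 𝕜) : ‖rankOne 𝕜 u w‖ ≤ ‖rankOne 𝕜 u w + c • T‖ := by
  set S := rankOne 𝕜 u w + c • T
  have hSw : inner 𝕜 u (S w) = ((‖u‖ * ‖w‖) ^ 2 : ℝ) := by
    simp only [S, _root_.add_apply, _root_.smul_apply, rankOne_apply, inner_add_right,
      inner_smul_right, h, inner_self_eq_norm_sq_to_K, mul_zero, add_zero]
    push_cast
    ring
  have hN : (‖u‖ * ‖w‖) * (‖u‖ * ‖w‖) ≤ ‖S‖ * (‖u‖ * ‖w‖) :=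
    calc (‖u‖ * ‖w‖) * (‖u‖ * ‖w‖) = ‖inner 𝕜 u (S w)‖ := by
          rw [hSw, RCLike.norm_ofReal, abs_of_nonneg (by positivity), sq]
      _ ≤ ‖u‖ * ‖S w‖ := norm_inner_le_norm _ _
      _ ≤ ‖u‖ * (‖S‖ * ‖w‖) := by gcongr; exact S.le_opNorm w
      _ = ‖S‖ * (‖u‖ * ‖w‖) := by ring
  rw [norm_rankOne]
  rcases (mul_nonneg (norm_nonneg u) (norm_nonneg w)).eq_or_lt with h0 | hpos
  · rw [← h0]
    exact norm_nonneg S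
  · exact le_of_mul_le_mul_right hN hpos

theorem exists_norm_rankOne_add_smul_lt (u : E) (w : F) (T : F →L[𝕜] E)
    (h : inner 𝕜 u (T w) ≠ 0) : ∃ c : 𝕜, ‖rankOne 𝕜 u w + c • T‖ < ‖rankOne 𝕜 u w‖ := by
  set t := inner 𝕜 u (T w)
  have hu : u ≠ 0 := by rintro rfl; simp [t] at h
  have hw : w ≠ 0 := by rintro rfl; simp [t] at h
  have ht : 0 < ‖t‖ := norm_pos_iff.2 h
  set ε : ℝ := 1 / (‖T‖ ^ 2 + 1)
  have hε : 0 < ε := by positivity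
  have hεT : ε * ‖T‖ ^ 2 < 1 := by
    rw [div_mul_eq_mul_div, one_mul, div_lt_one (by positivity)]
    linarith
  set c : 𝕜 := -(ε : 𝕜) * starRingEnd 𝕜 t
  set S := rankOne 𝕜 u w + c • T
  set N := ‖u‖ * ‖w‖
  set B := ε * ‖t‖ * ‖T‖
  set q := N ^ 2 - 2 * ε * ‖t‖ ^ 2 + B ^ 2
  have hc : ‖c‖ = ε * ‖t‖ := by
    rw [norm_mul, norm_neg, RCLike.norm_ofReal, abs_of_pos hε, RCLike.norm_conj]
  have hct : RCLike.re (c * t) = -(ε * ‖t‖ ^ 2) := by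
    rw [mul_assoc, RCLike.conj_mul, ← RCLike.ofReal_pow, ← RCLike.ofReal_neg, ← RCLike.ofReal_mul,
      RCLike.ofReal_re, neg_mul]
  have hSw : ‖S w‖ ^ 2 ≤ q * ‖w‖ ^ 2 := by
    have := norm_rankOne_add_smul_apply_self_sq_le u w T c
    rw [hct, hc] at this
    convert this using 2
    ring
  have hq : 0 ≤ q := le_of_mul_le_mul_right (by simpa using (sq_nonneg _).trans hSw)
    (by positivity : 0 < ‖w‖ ^ 2)
  have hK : ∀ y ∈ 𝕜 ∙ w, ‖S y‖ ≤ √q * ‖y‖ := by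
    intro y hy
    obtain ⟨a, rfl⟩ := Submodule.mem_span_singleton.1 hy
    rw [map_smul, norm_smul, norm_smul, mul_left_comm]
    gcongr
    rw [← Real.sqrt_sq (norm_nonneg (S w)), ← Real.sqrt_sq (norm_nonneg w), ← Real.sqrt_mul hq]
    exact Real.sqrt_le_sqrt hSw
  have hKperp : ∀ z ∈ (𝕜 ∙ w)ᗮ, ‖S z‖ ≤ B * ‖z‖ := by
    intro z hz
    rw [Submodule.mem_orthogonal_singleton_iff_inner_right] at hz
    rw [_root_.add_apply, rankOne_apply, hz, zero_smul, zero_add, _root_.smul_apply, norm_smul, hc]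
    exact (mul_le_mul_of_nonneg_left (T.le_opNorm z) (by positivity)).trans_eq (by ring)
  refine ⟨c, ?_⟩
  calc ‖S‖ ≤ √(√q ^ 2 + B ^ 2) := S.opNorm_le_sqrt_of_orthogonal _ hK hKperp
    _ < N := by
      rw [Real.sq_sqrt hq, Real.sqrt_lt' (by positivity)]
      have : 0 < ε * ‖t‖ ^ 2 * (1 - ε * ‖T‖ ^ 2) := by
        have := sub_pos.2 hεT
        positivity
      linarith
    _ = ‖rankOne 𝕜 u w‖ := (norm_rankOne u w).symm

theorem rankOne_birkhoffJamesOrthogonal_iff (u : E) (w : F) (T : F →L[𝕜] E) :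
    BirkhoffJamesOrthogonal 𝕜 (rankOne 𝕜 u w) T ↔ inner 𝕜 u (T w) = 0 := by
  refine ⟨fun h ↦ ?_, norm_rankOne_le_norm_rankOne_add_smul u w T⟩
  by_contra ht
  obtain ⟨c, hc⟩ := exists_norm_rankOne_add_smul_lt u w T ht
  exact (h c).not_gt hc

end RankOne

section EuclideanMatrix

variable {𝕜 : Type*} [RCLike 𝕜] {n : Type*} [Fintype n] [DecidableEq n]

theorem Matrix.toEuclideanCLM_vecMulVec_star (x y : n → 𝕜) :
    toEuclideanCLM (n := n) (𝕜 := 𝕜) (vecMulVec x (star y)) =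
      rankOne 𝕜 (WithLp.toLp 2 x) (WithLp.toLp 2 y) := by
  ext v i
  simp [vecMulVec_mulVec, EuclideanSpace.inner_eq_star_dotProduct, dotProduct_comm, mul_comm]

theorem Matrix.star_dotProduct_mulVec_eq_inner (x y : n → 𝕜) (X : Matrix n n 𝕜) :
    star x ⬝ᵥ X *ᵥ y =
      inner 𝕜 (WithLp.toLp 2 x) (toEuclideanCLM (n := n) (𝕜 := 𝕜) X (WithLp.toLp 2 y)) := by
  rw [toEuclideanCLM_toLp, EuclideanSpace.inner_toLp_toLp, dotProduct_comm]

end EuclideanMatrix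

theorem BJ_iff_birkhoffJamesOrthogonal {m : ℕ} (A B : Matrix (Fin m) (Fin m) ℂ) :
    BJ A B ↔ BirkhoffJamesOrthogonal ℂ (toEuclideanCLM (n := Fin m) (𝕜 := ℂ) A)
      (toEuclideanCLM (n := Fin m) (𝕜 := ℂ) B) := by
  simp only [BJ, BirkhoffJamesOrthogonal, opNorm, map_add, map_smul]

theorem stmt1 {n : ℕ} (x y : Fin n → ℂ)
    (X : Matrix (Fin n) (Fin n) ℂ) :
    BJ (Matrix.vecMulVec x (star y)) X ↔ dotProduct (star x) (X.mulVec y) = 0 := by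
  rw [BJ_iff_birkhoffJamesOrthogonal, toEuclideanCLM_vecMulVec_star,
    rankOne_birkhoffJamesOrthogonal_iff, star_dotProduct_mulVec_eq_inner]
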